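/- Main theorem: Assume that for every positive integer n that is not a power of 2, the Collatz trajectories of n and 3n+2 coalesce (O⁺(n) ∩ O⁺(3n+2) ≠ ∅). Then every positive integer n that is not a power of 2 has property R, i.e., n = (2^(a_{k+1}) - ∑_{i=0}^{k} 2^(a_i)·3^(k-i)) / 3^(k+1) for some increasing sequence of naturals a_0 ≤ a_1 ≤ ⋯ ≤ a_{k+1}. -/

import Mathlib

def T (n : ℕ) : ℕ := if n % 2 = 0 then n / 2 else 3 * n + 1

def PropR (m : ℕ) : Prop :=
  ∃ k : ℕ, ∃ a : ℕ → ℕ,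
    (∀ i, i ≤ k → a i ≤ a (i + 1)) ∧
    (3 : ℤ) ^ (k + 1) * m =
      2 ^ a (k + 1) - ∑ i ∈ Finset.range (k + 1), 2 ^ a i * 3 ^ (k - i)

/-!
The hypothesis makes every positive integer reach `1`, by strong induction: an odd `n = 2m + 1`
goes to `3m + 2` in two steps; for even `m` one more step lands on `3(m/2) + 1 < n`, and for odd
`m > 1` the trajectory of `3m + 2` meets that of `m < n`, which reaches `1`.

Property R is inherited backwards along `T`: doubling `m` shifts every exponent `a i` up by one,
and a representation of `3m + 1` with `k + 1` terms gives one of `m` with `k + 2` terms by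
prepending the exponent `a 0 = 0`. Since `1 = (2^2 - 2^0)/3` has property R, so does everything
that reaches `1`.
-/

lemma T_of_mod_two_eq_zero {n : ℕ} (h : n % 2 = 0) : T n = n / 2 := by simp [T, h]

lemma T_of_mod_two_eq_one {n : ℕ} (h : n % 2 = 1) : T n = 3 * n + 1 := by simp [T, h]

lemma T_T_of_mod_two_eq_one {n : ℕ} (h : n % 2 = 1) : T (T n) = 3 * (n / 2) + 2 := by
  rw [T_of_mod_two_eq_one h, T_of_mod_two_eq_zero (by omega)]
  omega

lemma isPeriodicPt_T_one : Function.IsPeriodicPt T 3 1 := rfl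

def ReachesOne (n : ℕ) : Prop := ∃ j, T^[j] n = 1

namespace ReachesOne

lemma of_iterate {n s : ℕ} (h : ReachesOne (T^[s] n)) : ReachesOne n := by
  obtain ⟨j, hj⟩ := h
  exact ⟨j + s, by rwa [Function.iterate_add_apply]⟩

/-- Once at `1` the trajectory cycles through `1, 4, 2`, so it returns to `1` after any
multiple of three further steps. -/
lemma iterate {n : ℕ} (h : ReachesOne n) (s : ℕ) : ReachesOne (T^[s] n) := by
  obtain ⟨j, hj⟩ := h
  refine ⟨j + 2 * s, ?_⟩
  rw [← Function.iterate_add_apply, show j + 2 * s + s = 3 * s + j by ring,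
    Function.iterate_add_apply, hj]
  exact (isPeriodicPt_T_one.mul_const s).eq

lemma of_orbits_meet {m n : ℕ} (hm : ReachesOne m)
    (hmeet : (Set.range (fun k => T^[k] m) ∩ Set.range (fun k => T^[k] n)).Nonempty) :
    ReachesOne n := by
  obtain ⟨v, ⟨s, rfl⟩, ⟨t, ht⟩⟩ := hmeet
  simp only at ht
  exact of_iterate (s := t) (ht ▸ hm.iterate s)

end ReachesOne

lemma ne_two_pow_of_odd {m : ℕ} (hodd : m % 2 = 1) (hm : 1 < m) (j : ℕ) : m ≠ 2 ^ j := by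
  rintro rfl
  cases j with
  | zero => simp at hm
  | succ j => rw [pow_succ] at hodd; omega

theorem reachesOne_of_coalescence
    (hyp : ∀ n : ℕ, 0 < n → (∀ j : ℕ, n ≠ 2 ^ j) →
      (Set.range (fun k => T^[k] n) ∩ Set.range (fun k => T^[k] (3 * n + 2))).Nonempty)
    (n : ℕ) (hn : 0 < n) : ReachesOne n := by
  induction n using Nat.strong_induction_on with
  | _ n ih =>
  rcases Nat.mod_two_eq_zero_or_one n with heven | hodd
  · refine ReachesOne.of_iterate (s := 1) ?_
    rw [Function.iterate_one, T_of_mod_two_eq_zero heven]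
    exact ih _ (by omega) (by omega)
  obtain rfl | hn1 : n = 1 ∨ 1 < n := by omega
  · exact ⟨0, rfl⟩
  set m := n / 2
  suffices ReachesOne (3 * m + 2) from
    ReachesOne.of_iterate (s := 2) (by rwa [Function.iterate_succ_apply',
      Function.iterate_one, T_T_of_mod_two_eq_one hodd])
  rcases Nat.mod_two_eq_zero_or_one m with hm_even | hm_odd
  · refine ReachesOne.of_iterate (s := 1) ?_
    rw [Function.iterate_one, T_of_mod_two_eq_zero (by omega)]
    exact ih _ (by omega) (by omega)
  obtain hm1 | hm1 : m = 1 ∨ 1 < m := by omega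
  · rw [hm1]; exact ⟨5, rfl⟩
  exact (ih m (by omega) (by omega)).of_orbits_meet
    (hyp m (by omega) (ne_two_pow_of_odd hm_odd hm1))

lemma propR_one : PropR 1 := ⟨0, fun i => 2 * i, by simp, by norm_num⟩

lemma PropR.two_mul {q : ℕ} (h : PropR q) : PropR (2 * q) := by
  obtain ⟨k, a, hmono, heq⟩ := h
  refine ⟨k, fun i => a i + 1, fun i hi => Nat.succ_le_succ (hmono i hi), ?_⟩
  rw [Nat.cast_mul, Nat.cast_ofNat, mul_left_comm, heq, mul_sub, Finset.mul_sum]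
  congr 1
  · ring
  · exact Finset.sum_congr rfl fun i _ => by ring

lemma PropR.of_three_mul_add_one {q : ℕ} (h : PropR (3 * q + 1)) : PropR q := by
  obtain ⟨k, a, hmono, heq⟩ := h
  refine ⟨k + 1, fun | 0 => 0 | i + 1 => a i, ?_, ?_⟩
  · rintro (_ | i) hi
    · exact Nat.zero_le _
    · exact hmono i (by omega)
  · rw [Finset.sum_range_succ']
    simp only [Nat.add_sub_add_right, pow_zero, one_mul, Nat.sub_zero]
    push_cast at heq
    linear_combination heq

lemma PropR.of_T {n : ℕ} (h : PropR (T n)) : PropR n := by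
  rcases Nat.mod_two_eq_zero_or_one n with heven | hodd
  · rw [T_of_mod_two_eq_zero heven] at h
    rw [← Nat.mul_div_cancel' (Nat.dvd_of_mod_eq_zero heven)]
    exact h.two_mul
  · rw [T_of_mod_two_eq_one hodd] at h
    exact h.of_three_mul_add_one

lemma ReachesOne.propR {n : ℕ} (h : ReachesOne n) : PropR n := by
  obtain ⟨j, hj⟩ := h
  induction j generalizing n with
  | zero => exact (show n = 1 from hj) ▸ propR_one
  | succ j ih => exact PropR.of_T (ih hj)

theorem stmt15
    (hyp : ∀ n : ℕ, 0 < n → (∀ j : ℕ, n ≠ 2 ^ j) →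
      (Set.range (fun k => T^[k] n) ∩ Set.range (fun k => T^[k] (3 * n + 2))).Nonempty) :
    ∀ n : ℕ, 0 < n → (∀ j : ℕ, n ≠ 2 ^ j) → PropR n :=
  fun n hn _ => (reachesOne_of_coalescence hyp n hn).propR
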